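/- arXiv:2105.09413 — 2 statements merged into one kernel-verified Lean document; each statement's English description precedes it below -/
import Mathlib

section
/- Let V be a nonempty finite list of linear orders (votes) on a finite set C, and let π₁, π₂ be linear orders on C with Kemeny scores k_opt + λ₁ and k_opt + λ₂ respectively, where k_opt is the minimum Kemeny score. If π₁ ≠ π₂, then max(k_opt + λ₁, k_opt + λ₂) ≥ m/2, where m = |V| is the number of votes. -/
noncomputable def KTdist {α : Type*} (l₁ l₂ : LinearOrder α) : ℕ :=
  Set.ncard {p : α × α | l₁.lt p.1 p.2 ∧ l₂.lt p.2 p.1}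

noncomputable def kemenyScore {α : Type*} [Fintype α] {m : ℕ}
    (votes : Fin m → LinearOrder α) (l : LinearOrder α) : ℕ :=
  ∑ i, KTdist l (votes i)

lemma exists_disagree {α : Type*} (π₁ π₂ : LinearOrder α) (hne : π₁ ≠ π₂) :
    ∃ a b, π₁.lt a b ∧ π₂.lt b a := by
  by_contra h
  push_neg at h
  apply hne
  have hlt : ∀ a b, π₁.lt a b ↔ π₂.lt a b := by
    intro a b
    constructor
    · intro hab
      rcases (@lt_or_eq_of_le α (@LinearOrder.toPartialOrder α π₂) a b (h a b hab)) with h3 | h3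
      · exact h3
      · exact absurd hab (h3 ▸ (@lt_irrefl α (@PartialOrder.toPreorder α (@LinearOrder.toPartialOrder α π₁)) a))
    · intro hab
      rcases (π₁.le_total a b).imp id id with h2 | h2
      · rcases (@lt_or_eq_of_le α (@LinearOrder.toPartialOrder α π₁) a b h2) with h3 | h3
        · exact h3
        · exact absurd hab (h3 ▸ (@lt_irrefl α (@PartialOrder.toPreorder α (@LinearOrder.toPartialOrder α π₂)) b))
      · rcases (@lt_or_eq_of_le α (@LinearOrder.toPartialOrder α π₁) b a h2) with h3 | h3
        · exact absurd hab ((@not_lt α π₂ a b).mpr (h b a h3))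
        · exact absurd hab (h3 ▸ (@lt_irrefl α (@PartialOrder.toPreorder α (@LinearOrder.toPartialOrder α π₂)) b))
  have hle : ∀ a b, π₁.le a b ↔ π₂.le a b := by
    intro a b
    rw [← @not_lt α (π₁) b a,
        ← @not_lt α (π₂) b a]
    exact not_congr (hlt b a)
  exact LinearOrder.ext hle

theorem two_good_solutions_high_cost {α : Type*} [Fintype α] {m : ℕ} (hm : 0 < m)
    (votes : Fin m → LinearOrder α) (kopt : ℕ)
    (hopt : IsLeast {k : ℕ | ∃ l : LinearOrder α, kemenyScore votes l = k} kopt)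
    (π₁ π₂ : LinearOrder α) (lam₁ lam₂ : ℕ)
    (h1 : kemenyScore votes π₁ = kopt + lam₁)
    (h2 : kemenyScore votes π₂ = kopt + lam₂)
    (hne : π₁ ≠ π₂) :
    (m : ℝ) / 2 ≤ max ((kopt + lam₁ : ℕ) : ℝ) ((kopt + lam₂ : ℕ) : ℝ) := by
  obtain ⟨a, b, hab1, hab2⟩ := exists_disagree π₁ π₂ hne
  have key : ∀ i, 1 ≤ KTdist π₁ (votes i) + KTdist π₂ (votes i) := by
    intro i
    rcases ((votes i).le_total a b).imp id id with hv | hv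
    · have hvlt : (votes i).lt a b := by
        rcases (@lt_or_eq_of_le α (@LinearOrder.toPartialOrder α (votes i)) a b hv) with h3 | h3
        · exact h3
        · exact absurd hab1 (h3 ▸ (@lt_irrefl α (@PartialOrder.toPreorder α (@LinearOrder.toPartialOrder α π₁)) a))
      have : 1 ≤ KTdist π₂ (votes i) := by
        have hpos : (0 : ℕ) < Set.ncard {p : α × α | π₂.lt p.1 p.2 ∧ (votes i).lt p.2 p.1} := by
          rw [Set.ncard_pos (Set.toFinite _)]
          exact ⟨(b, a), hab2, hvlt⟩
        exact hpos
      omega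
    · have hvlt : (votes i).lt b a := by
        rcases (@lt_or_eq_of_le α (@LinearOrder.toPartialOrder α (votes i)) b a hv) with h3 | h3
        · exact h3
        · exact absurd hab1 (h3 ▸ (@lt_irrefl α (@PartialOrder.toPreorder α (@LinearOrder.toPartialOrder α π₁)) b))
      have : 1 ≤ KTdist π₁ (votes i) := by
        have hpos : (0 : ℕ) < Set.ncard {p : α × α | π₁.lt p.1 p.2 ∧ (votes i).lt p.2 p.1} := by
          rw [Set.ncard_pos (Set.toFinite _)]
          exact ⟨(a, b), hab1, hvlt⟩
        exact hpos
      omega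
  have hsum : m ≤ kemenyScore votes π₁ + kemenyScore votes π₂ := by
    unfold kemenyScore
    rw [← Finset.sum_add_distrib]
    calc m = ∑ _i : Fin m, 1 := by simp
    _ ≤ _ := Finset.sum_le_sum (fun i _ => key i)
  rw [h1, h2] at hsum
  have : (m : ℝ) ≤ ((kopt + lam₁ : ℕ) : ℝ) + ((kopt + lam₂ : ℕ) : ℝ) := by
    exact_mod_cast hsum
  have h1' := le_max_left ((kopt + lam₁ : ℕ) : ℝ) ((kopt + lam₂ : ℕ) : ℝ)
  have h2' := le_max_right ((kopt + lam₁ : ℕ) : ℝ) ((kopt + lam₂ : ℕ) : ℝ)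
  linarith
end

section
/- Let P = (B₁, …, B_ℓ) be a ρ-consistent path decomposition of G_ρ and let τ be a linear extension of ρ. For each position p define S_p = {v ∈ B_p : v >_τ max_τ(L_p)} (with S_p = B_p if L_p = ∅). Then S_p contains all vertices introduced at position p, i.e., I(p) ⊆ S_p. -/
def cocompGraph {α : Type*} (r : α → α → Prop) : SimpleGraph α where
  Adj x y := x ≠ y ∧ ¬ r x y ∧ ¬ r y x
  symm := ⟨fun x y h => ⟨h.1.symm, h.2.2, h.2.1⟩⟩
  loopless := ⟨fun x h => h.1 rfl⟩

structure PathDecomp {V : Type*} (G : SimpleGraph V) where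
  len : ℕ
  bag : Fin len → Set V
  cover : ∀ v, ∃ i, v ∈ bag i
  edge : ∀ u v, G.Adj u v → ∃ i, u ∈ bag i ∧ v ∈ bag i
  convex : ∀ i j k : Fin len, i ≤ j → j ≤ k → ∀ v, v ∈ bag i → v ∈ bag k → v ∈ bag j

noncomputable def pathwidth {V : Type*} (G : SimpleGraph V) : ℕ :=
  sInf {w : ℕ | ∃ P : PathDecomp G, ∀ i, (P.bag i).ncard ≤ w + 1}

lemma cocompGraph.rel_or_rel_of_not_adj {α : Type*} {r : α → α → Prop} {x y : α}
    (hxy : x ≠ y) (h : ¬ (cocompGraph r).Adj x y) : r x y ∨ r y x := by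
  by_contra! hr
  exact h ⟨hxy, hr.1, hr.2⟩

namespace PathDecomp

variable {V : Type*} {G : SimpleGraph V} (P : PathDecomp G) {p : Fin P.len} {u w : V}

lemma not_adj_of_forgotten_before_introduced (hu : ∀ j : Fin P.len, j < p → u ∉ P.bag j)
    (hw : ∀ i : Fin P.len, w ∈ P.bag i → i < p) : ¬ G.Adj u w := fun hadj ↦ by
  obtain ⟨i, hui, hwi⟩ := P.edge u w hadj
  exact hu i (hw i hwi) hui

end PathDecomp

theorem introduced_in_Sp_general {α : Type*} (r : α → α → Prop)
    (P : PathDecomp (cocompGraph r))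
    (hcons : ∀ x y : α, r x y → x ≠ y →
      ∃ i j : Fin P.len, x ∈ P.bag j ∧ y ∈ P.bag i ∧ j ≤ i)
    (τ : LinearOrder α) (hext : ∀ x y : α, r x y → x ≠ y → τ.lt x y)
    (p : Fin P.len) (u : α) (hu : u ∈ P.bag p)
    (hu2 : ∀ j : Fin P.len, j < p → u ∉ P.bag j)
    (w : α)
    (hw2 : ∀ i : Fin P.len, w ∈ P.bag i → i < p) :
    τ.lt w u := by
  have hne : w ≠ u := by
    rintro rfl
    exact lt_irrefl p (hw2 p hu)
  have hnot_ruw : ¬ r u w := fun huw ↦ by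
    obtain ⟨i, j, huj, hwi, hji⟩ := hcons u w huw hne.symm
    exact hu2 j (hji.trans_lt (hw2 i hwi)) huj
  have hcomp := cocompGraph.rel_or_rel_of_not_adj hne
    (fun h ↦ P.not_adj_of_forgotten_before_introduced hu2 hw2 h.symm)
  exact hext w u (hcomp.resolve_right hnot_ruw) hne

theorem introduced_in_Sp {α : Type*} (r : α → α → Prop)
    (hr : IsPartialOrder α r) (P : PathDecomp (cocompGraph r))
    (hcons : ∀ x y : α, r x y → x ≠ y →
      ∃ i j : Fin P.len, x ∈ P.bag j ∧ y ∈ P.bag i ∧ j ≤ i)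
    (τ : LinearOrder α) (hext : ∀ x y : α, r x y → x ≠ y → τ.lt x y)
    (p : Fin P.len) (u : α) (hu : u ∈ P.bag p)
    (hu2 : ∀ j : Fin P.len, j < p → u ∉ P.bag j)
    (w : α) (hw1 : ∃ i, w ∈ P.bag i)
    (hw2 : ∀ i : Fin P.len, w ∈ P.bag i → i < p) :
    τ.lt w u :=
  introduced_in_Sp_general r P hcons τ hext p u hu hu2 w hw2
end
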